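/- For an odd cycle C_N with N = 2K+1 vertices, arrival rates α_1 = (ρ/K)/(1 + ρ/K) and α_i = (1/(2K))/(1 + ρ/K) for i ∈ {2, …, N}, with 0 < ρ < 1, satisfy the stability condition: for every nonempty independent set I of C_N, Σ_{i ∈ I} α_i < Σ_{j ∈ E(I)} α_j. -/

import Mathlib

/-!
Translation by one maps an independent set `I` of the odd cycle injectively into its
neighbourhood `E(I)`. If this were onto, every `i - 1 ∈ E(I)` would be some `j + 1` with
`j ∈ I`, so `I` would be closed under `i ↦ i - 2`; as `2` generates `ZMod (2K+1)`, `I` would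
be everything, which is not independent. Hence `|E(I)| ≥ |I| + 1`. The rates are a constant
`b` except for `a < 2b` at vertex `1`, and since `I` and `E(I)` are disjoint the vertex `1`
can tip the balance towards `I` by at most `a - b < b`.
-/

open Finset

def IsIndep {V : Type*} (G : SimpleGraph V) (I : Finset V) : Prop :=
  ∀ i ∈ I, ∀ j ∈ I, ¬ G.Adj i j

def nbhd {V : Type*} [Fintype V] [DecidableEq V] (G : SimpleGraph V) [DecidableRel G.Adj]
    (A : Finset V) : Finset V :=
  A.biUnion fun i => G.neighborFinset i

def cycleGraph (N : ℕ) : SimpleGraph (ZMod N) where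
  Adj i j := i ≠ j ∧ (i + 1 = j ∨ j + 1 = i)
  symm := by
    constructor
    rintro i j ⟨h1, h2⟩
    exact ⟨h1.symm, h2.symm⟩
  loopless := by constructor; rintro i ⟨h1, _⟩; exact h1 rfl

section Graph

variable {V : Type*} [Fintype V] [DecidableEq V] {G : SimpleGraph V} [DecidableRel G.Adj]

@[simp]
lemma mem_nbhd {A : Finset V} {j : V} : j ∈ nbhd G A ↔ ∃ i ∈ A, G.Adj i j := by
  simp [nbhd]

lemma IsIndep.disjoint_nbhd {I : Finset V} (hI : IsIndep G I) : Disjoint I (nbhd G I) :=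
  disjoint_left.mpr fun j hj hjn =>
    let ⟨i, hi, hij⟩ := mem_nbhd.mp hjn
    hI i hi j hj hij

end Graph

section Cycle

variable {N : ℕ} [Nontrivial (ZMod N)]

lemma cycleGraph_adj_add_one (i : ZMod N) : (cycleGraph N).Adj i (i + 1) :=
  ⟨left_ne_add.mpr one_ne_zero, Or.inl rfl⟩

variable [NeZero N]

lemma cycleGraph_not_isIndep_univ : ¬ IsIndep (cycleGraph N) univ := fun h =>
  h 0 (mem_univ _) 1 (mem_univ _) (by simpa using cycleGraph_adj_add_one (0 : ZMod N))

variable [DecidableRel (cycleGraph N).Adj]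

lemma image_add_one_subset_nbhd (I : Finset (ZMod N)) :
    I.image (· + 1) ⊆ nbhd (cycleGraph N) I := by
  intro j hj
  obtain ⟨i, hi, rfl⟩ := mem_image.mp hj
  exact mem_nbhd.mpr ⟨i, hi, cycleGraph_adj_add_one i⟩

lemma sub_two_mem_of_nbhd_eq_image {I : Finset (ZMod N)}
    (hI : nbhd (cycleGraph N) I = I.image (· + 1)) {i : ZMod N} (hi : i ∈ I) : i - 2 ∈ I := by
  have hadj : (cycleGraph N).Adj i (i - 1) := by
    have h := (cycleGraph_adj_add_one (i - 1)).symm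
    rwa [sub_add_cancel] at h
  obtain ⟨j, hj, hji⟩ := mem_image.mp (hI ▸ mem_nbhd.mpr ⟨i, hi, hadj⟩)
  rwa [show i - 2 = j by linear_combination -hji]

end Cycle

lemma ZMod.eq_univ_of_sub_two_mem {K : ℕ} {S : Finset (ZMod (2 * K + 1))} (hne : S.Nonempty)
    (hS : ∀ i ∈ S, i - 2 ∈ S) : S = univ := by
  obtain ⟨i₀, hi₀⟩ := hne
  have hiter : ∀ m : ℕ, i₀ - 2 * m ∈ S := by
    intro m
    induction m with
    | zero => simpa using hi₀
    | succ m ih => simpa [mul_add, sub_add_eq_sub_sub] using hS _ ih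
  -- `K + 1` is the inverse of `2` modulo `2K + 1`
  have hinv : (2 : ZMod (2 * K + 1)) * (K + 1) = 1 := by
    have h := ZMod.natCast_self (2 * K + 1)
    push_cast at h
    linear_combination h
  refine eq_univ_of_forall fun t => ?_
  have ht : i₀ - 2 * (((i₀ - t) * (K + 1)).val : ZMod (2 * K + 1)) = t := by
    rw [ZMod.natCast_zmod_val]
    linear_combination (t - i₀) * hinv
  exact ht ▸ hiter _

lemma card_lt_card_nbhd_cycleGraph {K : ℕ} (hK : 1 ≤ K)
    [DecidableRel (cycleGraph (2 * K + 1)).Adj] {I : Finset (ZMod (2 * K + 1))}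
    (hne : I.Nonempty) (hI : IsIndep (cycleGraph (2 * K + 1)) I) :
    #I < #(nbhd (cycleGraph (2 * K + 1)) I) := by
  have : Fact (1 < 2 * K + 1) := ⟨by omega⟩
  have hsub := image_add_one_subset_nbhd I
  rw [← card_image_of_injective I (add_left_injective 1)]
  refine lt_of_le_of_ne (card_le_card hsub) fun hcard => ?_
  have hI_univ : I = univ :=
    ZMod.eq_univ_of_sub_two_mem hne fun i hi =>
      sub_two_mem_of_nbhd_eq_image (eq_of_subset_of_card_le hsub hcard.ge).symm hi
  exact cycleGraph_not_isIndep_univ (hI_univ ▸ hI)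

lemma sum_ite_eq_card_mul_add {ι : Type*} [DecidableEq ι] (S : Finset ι) (v : ι) (a b : ℝ) :
    ∑ i ∈ S, (if i = v then a else b) = #S * b + if v ∈ S then a - b else 0 := by
  rw [← sum_ite_eq' S v fun _ => a - b, ← nsmul_eq_mul, ← sum_const, ← sum_add_distrib]
  exact sum_congr rfl fun i _ => by split_ifs <;> ring

lemma sum_ite_lt_sum_ite_of_disjoint {ι : Type*} [DecidableEq ι] {s t : Finset ι}
    (hst : Disjoint s t) (hcard : #s < #t) (v : ι) {a b : ℝ} (ha : 0 < a) (hab : a < 2 * b) :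
    ∑ i ∈ s, (if i = v then a else b) < ∑ i ∈ t, (if i = v then a else b) := by
  rw [sum_ite_eq_card_mul_add, sum_ite_eq_card_mul_add]
  have hb : 0 < b := by linarith
  have hcard_mul : (#s + 1 : ℝ) * b ≤ #t * b := by gcongr; exact_mod_cast hcard
  by_cases hvs : v ∈ s
  · rw [if_pos hvs, if_neg (disjoint_left.mp hst hvs)]
    linarith
  · rw [if_neg hvs]
    split_ifs <;> linarith

/-- The arrival rates `α_1 = (ρ/K)/(1 + ρ/K)`, `α_i = (1/(2K))/(1 + ρ/K)` for `i ≠ 1`,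
with `0 < ρ < 1`, satisfy the stability condition on the odd cycle `C_{2K+1}`. -/
theorem stmt3 (K : ℕ) (hK : 1 ≤ K)
    [DecidableRel (cycleGraph (2 * K + 1)).Adj]
    (ρ : ℝ) (hρ0 : 0 < ρ) (hρ1 : ρ < 1)
    (α : ZMod (2 * K + 1) → ℝ)
    (hα : ∀ i, α i = if i = 1 then (ρ / K) / (1 + ρ / K)
                     else (1 / (2 * K)) / (1 + ρ / K)) :
    ∀ I : Finset (ZMod (2 * K + 1)), I.Nonempty → IsIndep (cycleGraph (2 * K + 1)) I →
      ∑ i ∈ I, α i < ∑ j ∈ nbhd (cycleGraph (2 * K + 1)) I, α j := by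
  intro I hne hI
  have hK0 : (0 : ℝ) < K := by exact_mod_cast hK
  have hd : 0 < 1 + ρ / K := by positivity
  have hrate : (ρ / K) / (1 + ρ / K) < 2 * ((1 / (2 * K)) / (1 + ρ / K)) := by
    rw [← mul_div_assoc, div_lt_div_iff_of_pos_right hd]
    field_simp
    exact hρ1
  simp only [hα]
  exact sum_ite_lt_sum_ite_of_disjoint hI.disjoint_nbhd (card_lt_card_nbhd_cycleGraph hK hne hI)
    1 (by positivity) hrate
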